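/- arXiv:2602.07232 — 4 statements merged into one kernel-verified Lean document; each statement's English description precedes it below -/
import Mathlib

section
/- For every Prym curve (C,η) and every integer r' ≥ 1, the Prym-canonical Clifford dimension of (C,η) is not equal to (0, r'). That is, if L is a line bundle of degree ≤ g−1 computing the Prym-canonical Clifford index with h^0(L) = 1, then there is a line bundle L_1 computing the index with (h^0(L_1)−1, h^0(L_1⊗η)−1) lexicographically smaller whenever h^0(L⊗η) ≥ 2. -/
/-- Abstract data of a smooth projective curve over `ℂ`. -/
structure Curve where
  Point : Type
  Pic : Type
  [picGroup : AddCommGroup Pic]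
  g : ℕ
  deg : Pic → ℤ
  h0 : Pic → ℕ
  K : Pic
  pt : Point → Pic
  point_nonempty : Nonempty Point
  deg_add : ∀ L M : Pic, deg (L + M) = deg L + deg M
  deg_pt : ∀ p : Point, deg (pt p) = 1
  h0_trivial : h0 0 = 1
  deg_K : deg K = 2 * (g : ℤ) - 2
  riemannRoch : ∀ L : Pic, (h0 L : ℤ) - (h0 (K - L) : ℤ) = deg L + 1 - (g : ℤ)
  h0_of_deg_neg : ∀ L : Pic, deg L < 0 → h0 L = 0
  h0_of_deg_zero : ∀ L : Pic, deg L = 0 → L ≠ 0 → h0 L = 0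
  h0_sub_point : ∀ (L : Pic) (p : Point),
    h0 (L - pt p) = h0 L ∨ (h0 (L - pt p) : ℤ) = (h0 L : ℤ) - 1
  effective_iff : ∀ L : Pic, 1 ≤ h0 L ↔ ∃ D : Multiset Point, L = (D.map pt).sum

attribute [instance] Curve.picGroup

namespace Curve

variable (X : Curve)

def divOf (D : Multiset X.Point) : X.Pic := (D.map X.pt).sum

def h1 (L : X.Pic) : ℕ := X.h0 (X.K - L)

def IsBasePoint (L : X.Pic) (p : X.Point) : Prop :=
  1 ≤ X.h0 L ∧ X.h0 (L - X.pt p) = X.h0 L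

def BasePointFree (L : X.Pic) : Prop :=
  1 ≤ X.h0 L ∧ ∀ p : X.Point, (X.h0 (L - X.pt p) : ℤ) = (X.h0 L : ℤ) - 1

def VeryAmple (L : X.Pic) : Prop :=
  ∀ p q : X.Point, (X.h0 (L - X.pt p - X.pt q) : ℤ) = (X.h0 L : ℤ) - 2

def cliffEta (η L : X.Pic) : ℤ :=
  X.deg L - (X.h0 L : ℤ) - (X.h0 (L + η) : ℤ) + 1

def cliff (L : X.Pic) : ℤ := X.deg L - 2 * (X.h0 L : ℤ) + 2

def Contributes (η L : X.Pic) : Prop :=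
  X.deg L ≤ (X.g : ℤ) - 1 ∧ 1 ≤ X.h0 L ∧ 1 ≤ X.h0 (L + η)

def PrymCliffIs (η : X.Pic) (n : ℤ) : Prop :=
  IsLeast {m : ℤ | ∃ L : X.Pic, X.Contributes η L ∧ X.cliffEta η L = m} n

def ComputesIndex (η L : X.Pic) : Prop :=
  X.Contributes η L ∧ ∀ M : X.Pic, X.Contributes η M → X.cliffEta η L ≤ X.cliffEta η M

def rPair (η L : X.Pic) : ℕ × ℕ := (X.h0 L - 1, X.h0 (L + η) - 1)

def PrymCliffDimIs (η : X.Pic) (d : ℕ × ℕ) : Prop :=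
  (∃ L : X.Pic, X.ComputesIndex η L ∧ X.rPair η L = d) ∧
  ∀ L : X.Pic, X.ComputesIndex η L → toLex d ≤ toLex (X.rPair η L)

def ComputesDim (η L : X.Pic) : Prop :=
  X.ComputesIndex η L ∧ X.PrymCliffDimIs η (X.rPair η L)

def ContributesCliff (L : X.Pic) : Prop := 2 ≤ X.h0 L ∧ 2 ≤ X.h1 L

def CliffIs (n : ℤ) : Prop :=
  IsLeast {m : ℤ | ∃ L : X.Pic, X.ContributesCliff L ∧ X.cliff L = m} n

def GonalityIs (n : ℤ) : Prop :=
  IsLeast {m : ℤ | ∃ L : X.Pic, 2 ≤ X.h0 L ∧ X.deg L = m} n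

def InSecant (M : X.Pic) (e f : ℕ) (D : Multiset X.Point) : Prop :=
  Multiset.card D = e ∧ (X.h0 M : ℤ) - e + f ≤ (X.h0 (M - X.divOf D) : ℤ)

def IsWeierstrass (M : X.Pic) (w : X.Point) : Prop := X.pt w + X.pt w = M

end Curve
/-- For every Prym curve `(C, η)` and every `r' ≥ 1`, the Prym-canonical
Clifford dimension of `(C, η)` is not `(0, r')`. -/
theorem prym_cliff_dim_ne_zero_r (X : Curve) (η : X.Pic)
    (hg : 2 ≤ X.g) (hη : η ≠ 0) (hη2 : η + η = 0)
    (r' : ℕ) (hr' : 1 ≤ r') :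
    ¬ X.PrymCliffDimIs η (0, r') := by
  classical
  -- preliminary facts
  have deg_zero : X.deg 0 = 0 := by
    have h := X.deg_add 0 0
    rw [add_zero] at h; linarith
  have deg_divOf : ∀ D : Multiset X.Point, X.deg (X.divOf D) = Multiset.card D := by
    intro D
    induction D using Multiset.induction with
    | empty => simpa [Curve.divOf] using deg_zero
    | cons p D ih =>
        simp only [Curve.divOf, Multiset.map_cons, Multiset.sum_cons] at ih ⊢
        rw [X.deg_add, X.deg_pt, ih, Multiset.card_cons]
        push_cast; ring
  have deg_eta : X.deg η = 0 := by
    have h := X.deg_add η η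
    rw [hη2, deg_zero] at h; linarith
  rintro ⟨⟨L, hComp, hPair⟩, hLex⟩
  obtain ⟨⟨hdeg, hL1, hLη1⟩, hmin⟩ := hComp
  have hPair1 : X.h0 L - 1 = 0 := congrArg Prod.fst hPair
  have hPair2 : X.h0 (L + η) - 1 = r' := congrArg Prod.snd hPair
  have h0L : X.h0 L = 1 := by omega
  have h0Lη : X.h0 (L + η) = r' + 1 := by omega
  -- deg L ≥ 1
  have hdL0 : 0 ≤ X.deg L := by
    by_contra h
    have := X.h0_of_deg_neg L (by linarith)
    omega
  have hLne : L ≠ 0 := by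
    intro h
    have : X.h0 (L + η) = 0 := by
      rw [h, zero_add]; exact X.h0_of_deg_zero η deg_eta hη
    omega
  have hdL1 : 1 ≤ X.deg L := by
    rcases lt_or_eq_of_le hdL0 with h | h
    · omega
    · exact absurd (X.h0_of_deg_zero L h.symm hLne) (by omega)
  -- L is effective
  obtain ⟨D, hD⟩ := (X.effective_iff L).mp (by omega)
  have hDdeg : X.deg L = Multiset.card D := by rw [hD]; exact deg_divOf D
  have hDne : D ≠ 0 := by
    intro h; rw [h] at hDdeg; simp at hDdeg; omega
  obtain ⟨p, hp⟩ := Multiset.exists_mem_of_ne_zero hDne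
  set L' := L - X.pt p with hL'
  -- L' is effective, so h0 L' = 1
  have hLsplit : L = X.pt p + X.divOf (D.erase p) := by
    rw [hD]
    conv_lhs => rw [← Multiset.cons_erase hp]
    simp [Curve.divOf]
  have hL'eff : 1 ≤ X.h0 L' := by
    refine (X.effective_iff L').mpr ⟨D.erase p, ?_⟩
    rw [hL', hLsplit]; simp [Curve.divOf]
  have h0L' : X.h0 L' = 1 := by
    rcases X.h0_sub_point L p with h | h
    · rw [← hL'] at h; omega
    · rw [← hL'] at h; omega
  have hL'deg : X.deg L' = X.deg L - 1 := by
    have : X.deg L = X.deg L' + 1 := by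
      have := X.deg_add L' (X.pt p)
      rw [sub_add_cancel] at this
      rw [this, X.deg_pt]
    omega
  have hL'η : L' + η = (L + η) - X.pt p := by rw [hL']; abel
  rcases X.h0_sub_point (L + η) p with h | h
  · -- p is a base point of L + η : index drops, contradiction
    have hcontrib : X.Contributes η L' := by
      refine ⟨by omega, by omega, ?_⟩
      rw [hL'η, h]; omega
    have hle := hmin L' hcontrib
    have : X.cliffEta η L' = X.cliffEta η L - 1 := by
      simp only [Curve.cliffEta, hL'deg, hL'η, h]
      push_cast; omega
    omega
  · -- index stays, but rPair drops
    have h0L'η : X.h0 (L' + η) = r' := by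
      rw [hL'η]; omega
    have hcontrib : X.Contributes η L' := ⟨by omega, by omega, by omega⟩
    have hceq : X.cliffEta η L' = X.cliffEta η L := by
      simp only [Curve.cliffEta, hL'deg, h0L', h0L, h0L'η, h0Lη]
      push_cast; ring
    have hcomp' : X.ComputesIndex η L' := by
      refine ⟨hcontrib, fun M hM => ?_⟩
      rw [hceq]; exact hmin M hM
    have := hLex L' hcomp'
    rw [Prod.Lex.le_iff] at this
    simp only [Curve.rPair, h0L', h0L'η, ofLex_toLex] at this
    omega
end

section
/- Let (C,η) be a Prym curve and L a line bundle computing the Prym-canonical Clifford index of (C,η). Then L and L⊗η have no base points in common. If moreover dim Cliff_η(C) ≥ (1,1) and L computes the Prym-canonical Clifford dimension of (C,η), then both L and L⊗η are base point free. -/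
/-- If `L` computes the Prym-canonical Clifford index of `(C, η)`, then `L` and
`L ⊗ η` have no common base point.  If moreover `dim Cliff_η(C) ≥ (1, 1)` (in the
lexicographic order) and `L` computes the Prym-canonical Clifford dimension, then
both `L` and `L ⊗ η` are base point free. -/
theorem base_points_of_computing (X : Curve) (η : X.Pic)
    (hg : 2 ≤ X.g) (hη : η ≠ 0) (hη2 : η + η = 0)
    (L : X.Pic) (hL : X.ComputesIndex η L) :
    (¬ ∃ p : X.Point, X.IsBasePoint L p ∧ X.IsBasePoint (L + η) p) ∧
    (∀ d : ℕ × ℕ, X.PrymCliffDimIs η d → toLex ((1, 1) : ℕ × ℕ) ≤ toLex d →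
      X.ComputesDim η L →
      X.BasePointFree L ∧ X.BasePointFree (L + η)) := by

  have hdeg0 : X.deg 0 = 0 := by
    have h := X.deg_add 0 0
    rw [add_zero] at h; linarith
  have hdegsub : ∀ A B : X.Pic, X.deg (A - B) = X.deg A - X.deg B := by
    intro A B
    have hneg : X.deg (-B) = - X.deg B := by
      have h := X.deg_add B (-B)
      rw [add_neg_cancel, hdeg0] at h; linarith
    rw [sub_eq_add_neg, X.deg_add, hneg]; ring
  have hdegeta : X.deg η = 0 := by
    have h := X.deg_add η η
    rw [hη2, hdeg0] at h; linarith
  obtain ⟨⟨hdL, h0L, h0Lη⟩, hmin⟩ := hL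
  have part1 : ¬ ∃ p : X.Point, X.IsBasePoint L p ∧ X.IsBasePoint (L + η) p := by
    rintro ⟨p, ⟨-, hbp1⟩, ⟨-, hbp2⟩⟩
    have hMη : (L - X.pt p) + η = L + η - X.pt p := by abel
    have hcon : X.Contributes η (L - X.pt p) := by
      refine ⟨?_, ?_, ?_⟩
      · rw [hdegsub, X.deg_pt]; omega
      · rw [hbp1]; exact h0L
      · rw [hMη, hbp2]; exact h0Lη
    have h := hmin _ hcon
    simp only [Curve.cliffEta, hMη, hbp1, hbp2, hdegsub, X.deg_pt] at h
    omega
  refine ⟨part1, ?_⟩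
  intro d hd hge hcd
  have h1 := hge.trans (hd.2 L ⟨⟨hdL, h0L, h0Lη⟩, hmin⟩)
  simp only [Curve.rPair, Prod.Lex.le_iff, ofLex_toLex] at h1
  have hr1 : 2 ≤ X.h0 L := by omega
  have hLη2 : L + η + η = L := by rw [add_assoc, hη2, add_zero]
  have hconη : X.Contributes η (L + η) := by
    refine ⟨?_, h0Lη, ?_⟩
    · rw [X.deg_add, hdegeta]; omega
    · rw [hLη2]; exact h0L
  have hceq : X.cliffEta η (L + η) = X.cliffEta η L := by
    simp only [Curve.cliffEta, hLη2, X.deg_add, hdegeta]; ring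
  have hcompη : X.ComputesIndex η (L + η) :=
    ⟨hconη, fun M hM => by rw [hceq]; exact hmin M hM⟩
  have h2 := hcd.2.2 (L + η) hcompη
  simp only [Curve.rPair, hLη2, Prod.Lex.le_iff, ofLex_toLex] at h2
  have hr2 : 2 ≤ X.h0 (L + η) := by omega
  constructor
  · refine ⟨h0L, fun p => ?_⟩
    rcases X.h0_sub_point L p with hbp | hok
    · exfalso
      have hnb : X.h0 (L + η - X.pt p) ≠ X.h0 (L + η) := fun hc =>
        part1 ⟨p, ⟨h0L, hbp⟩, ⟨h0Lη, hc⟩⟩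
      have hdrop : (X.h0 (L + η - X.pt p) : ℤ) = (X.h0 (L + η) : ℤ) - 1 := by
        rcases X.h0_sub_point (L + η) p with h | h
        · exact absurd h hnb
        · exact h
      have hMη : (L - X.pt p) + η = L + η - X.pt p := by abel
      have hcon : X.Contributes η (L - X.pt p) := by
        refine ⟨?_, ?_, ?_⟩
        · rw [hdegsub, X.deg_pt]; omega
        · rw [hbp]; exact h0L
        · rw [hMη]; omega
      have hceq2 : X.cliffEta η (L - X.pt p) = X.cliffEta η L := by
        simp only [Curve.cliffEta, hMη, hbp, hdegsub, X.deg_pt]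
        omega
      have hcomp : X.ComputesIndex η (L - X.pt p) :=
        ⟨hcon, fun M hM => by rw [hceq2]; exact hmin M hM⟩
      have h3 := hcd.2.2 _ hcomp
      simp only [Curve.rPair, hMη, hbp, Prod.Lex.le_iff, ofLex_toLex] at h3
      omega
    · exact hok
  · refine ⟨h0Lη, fun q => ?_⟩
    rcases X.h0_sub_point (L + η) q with hbp | hok
    · exfalso
      have hnb : X.h0 (L - X.pt q) ≠ X.h0 L := fun hc =>
        part1 ⟨q, ⟨h0L, hc⟩, ⟨h0Lη, hbp⟩⟩
      have hdrop : (X.h0 (L - X.pt q) : ℤ) = (X.h0 L : ℤ) - 1 := by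
        rcases X.h0_sub_point L q with h | h
        · exact absurd h hnb
        · exact h
      have hMη : (L - X.pt q) + η = L + η - X.pt q := by abel
      have hcon : X.Contributes η (L - X.pt q) := by
        refine ⟨?_, ?_, ?_⟩
        · rw [hdegsub, X.deg_pt]; omega
        · omega
        · rw [hMη, hbp]; exact h0Lη
      have hceq2 : X.cliffEta η (L - X.pt q) = X.cliffEta η L := by
        simp only [Curve.cliffEta, hMη, hbp, hdegsub, X.deg_pt]
        omega
      have hcomp : X.ComputesIndex η (L - X.pt q) :=
        ⟨hcon, fun M hM => by rw [hceq2]; exact hmin M hM⟩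
      have h3 := hcd.2.2 _ hcomp
      simp only [Curve.rPair, hMη, hbp, Prod.Lex.le_iff, ofLex_toLex] at h3
      omega
    · exact hok
end

section
/- Let (C,η) be a Prym curve and L a line bundle computing the Prym-canonical Clifford dimension of (C,η). Then for every positive integers f, f', e with 1 ≤ f < e ≤ min{deg L, r(L)+f}, 1 ≤ f' < e ≤ min{deg L, r(L⊗η)+f'} and f + f' ≥ e, the secant varieties V_e^{e−f}(L) and V_e^{e−f'}(L⊗η) are disjoint: no effective divisor D of degree e satisfies both h^0(L(−D)) ≥ h^0(L) − e + f and h^0(L⊗η(−D)) ≥ h^0(L⊗η) − e + f'. -/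
namespace Curve

lemma deg_zero' (X : Curve) : X.deg 0 = 0 := by
  have h := X.deg_add 0 0
  rw [add_zero] at h; linarith

lemma deg_neg' (X : Curve) (A : X.Pic) : X.deg (-A) = -X.deg A := by
  have h := X.deg_add A (-A)
  rw [add_neg_cancel, X.deg_zero'] at h; linarith

lemma deg_divOf' (X : Curve) (D : Multiset X.Point) :
    X.deg (X.divOf D) = Multiset.card D := by
  induction D using Multiset.induction with
  | empty => simp [divOf, X.deg_zero']
  | cons p D ih =>
      simp only [divOf, Multiset.map_cons, Multiset.sum_cons] at *
      rw [X.deg_add, X.deg_pt, ih, Multiset.card_cons]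
      push_cast; ring

end Curve

/-- If `L` computes the Prym-canonical Clifford dimension of `(C, η)`, then for
all `1 ≤ f < e ≤ min (deg L) (r(L) + f)`, `1 ≤ f' < e ≤ min (deg L) (r(L⊗η) + f')`
with `f + f' ≥ e`, the secant varieties `V_e^{e−f}(L)` and `V_e^{e−f'}(L ⊗ η)`
are disjoint. -/
theorem secant_disjoint (X : Curve) (η : X.Pic)
    (hg : 2 ≤ X.g) (hη : η ≠ 0) (hη2 : η + η = 0)
    (L : X.Pic) (hL : X.ComputesDim η L)
    (e f f' : ℕ)
    (hf1 : 1 ≤ f) (hfe : f < e) (heL : (e : ℤ) ≤ X.deg L)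
    (her : e ≤ (X.h0 L - 1) + f)
    (hf'1 : 1 ≤ f') (hf'e : f' < e)
    (her' : e ≤ (X.h0 (L + η) - 1) + f')
    (hsum : e ≤ f + f') :
    ¬ ∃ D : Multiset X.Point,
        X.InSecant L e f D ∧ X.InSecant (L + η) e f' D := by
  rintro ⟨D, ⟨hcard, hS1⟩, ⟨hcard2, hS2⟩⟩
  obtain ⟨⟨⟨hLdeg, hL0, hLη0⟩, hmin⟩, hdim⟩ := hL
  set M := L - X.divOf D with hM
  have hdegD : X.deg (X.divOf D) = (e : ℤ) := by rw [X.deg_divOf', hcard]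
  have hdegM : X.deg M = X.deg L - e := by
    rw [hM, sub_eq_add_neg, X.deg_add, X.deg_neg', hdegD]; ring
  have hMη : L + η - X.divOf D = M + η := by rw [hM]; abel
  rw [hMη] at hS2
  -- h0 M ≥ 1 and h0 (M+η) ≥ 1
  have hM1 : 1 ≤ X.h0 M := by omega
  have hMη1 : 1 ≤ X.h0 (M + η) := by omega
  have hcM : X.Contributes η M := by
    refine ⟨?_, hM1, hMη1⟩
    rw [hdegM]
    have : (0 : ℤ) ≤ e := by positivity
    linarith
  have hcliffle : X.cliffEta η M ≤ X.cliffEta η L := by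
    unfold Curve.cliffEta
    rw [hdegM]
    have hsz : (e : ℤ) ≤ (f : ℤ) + (f' : ℤ) := by exact_mod_cast hsum
    linarith
  have hcliffge : X.cliffEta η L ≤ X.cliffEta η M := hmin M hcM
  have hcliffeq : X.cliffEta η M = X.cliffEta η L := le_antisymm hcliffle hcliffge
  -- from equality of Clifford indices, h0 M < h0 L
  have hsumh : (X.h0 M : ℤ) + (X.h0 (M + η) : ℤ)
      = (X.h0 L : ℤ) + (X.h0 (L + η) : ℤ) - e := by
    unfold Curve.cliffEta at hcliffeq
    rw [hdegM] at hcliffeq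
    linarith
  have hlt : X.h0 M < X.h0 L := by omega
  have hcomp : X.ComputesIndex η M := by
    refine ⟨hcM, fun N hN => ?_⟩
    rw [hcliffeq]; exact hmin N hN
  have hlex := hdim.2 M hcomp
  rw [Prod.Lex.le_iff] at hlex
  unfold Curve.rPair at hlex
  simp only [ofLex_toLex] at hlex
  omega
end

section
/- Let (C,η) be a Prym curve of genus g, π : C̃ → C the étale double cover induced by η, with covering involution ι on C̃. Then the ι-invariant Clifford index of C̃ satisfies Cliff(C̃)^ι = 2·min{Cliff_η(C), gon(C) − 1}, where gon(C) denotes the gonality of C. -/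
lemma Curve.deg_zero (X : Curve) : X.deg 0 = 0 := by
  have := X.deg_add 0 0; simpa using this

lemma Curve.deg_neg (X : Curve) (L : X.Pic) : X.deg (-L) = - X.deg L := by
  have h := X.deg_add L (-L)
  rw [add_neg_cancel, X.deg_zero] at h
  linarith

lemma Curve.deg_sub (X : Curve) (L M : X.Pic) : X.deg (L - M) = X.deg L - X.deg M := by
  rw [sub_eq_add_neg, X.deg_add, X.deg_neg]; ring

lemma Curve.deg_pos_of_h0 (X : Curve) (M : X.Pic) (h : 2 ≤ X.h0 M) : 1 ≤ X.deg M := by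
  by_contra hlt
  push_neg at hlt
  rcases lt_or_eq_of_le (by omega : X.deg M ≤ 0) with h0 | h0
  · have := X.h0_of_deg_neg M h0; omega
  · by_cases hM : M = 0
    · rw [hM, X.h0_trivial] at h; omega
    · have := X.h0_of_deg_zero M h0 hM; omega

/-- From a bundle with `h⁰ ≥ 2`, the gonality satisfies `d ≤ deg − h⁰ + 2`. -/
lemma Curve.gon_le_aux (X : Curve) (d : ℤ) (hd : X.GonalityIs d) :
    ∀ n : ℕ, ∀ M : X.Pic, (X.deg M).toNat = n → 2 ≤ X.h0 M →
      d ≤ X.deg M - (X.h0 M : ℤ) + 2 := by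
  intro n
  induction n using Nat.strong_induction_on with
  | _ n ih =>
    intro M hn h2
    have hdpos : 1 ≤ X.deg M := X.deg_pos_of_h0 M h2
    rcases eq_or_lt_of_le h2 with heq | hgt3
    · have hmem : X.deg M ∈ {m : ℤ | ∃ L : X.Pic, 2 ≤ X.h0 L ∧ X.deg L = m} :=
        ⟨M, h2, rfl⟩
      have := hd.2 hmem
      omega
    · obtain ⟨p⟩ := X.point_nonempty
      have hdeg' : X.deg (M - X.pt p) = X.deg M - 1 := by
        rw [X.deg_sub, X.deg_pt]
      have hsub := X.h0_sub_point M p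
      have h2' : 2 ≤ X.h0 (M - X.pt p) := by
        rcases hsub with h | h
        · omega
        · omega
      have hlt : (X.deg (M - X.pt p)).toNat < n := by
        rw [hdeg']; omega
      have := ih _ hlt (M - X.pt p) rfl h2'
      rcases hsub with h | h
      · rw [hdeg'] at this; omega
      · rw [hdeg'] at this; omega

lemma Curve.gon_le (X : Curve) (d : ℤ) (hd : X.GonalityIs d) (M : X.Pic)
    (h : 2 ≤ X.h0 M) : d ≤ X.deg M - (X.h0 M : ℤ) + 2 :=
  X.gon_le_aux d hd _ M rfl h

/-- Let `π : C̃ → C` be the étale double cover induced by `η` (so `g(C̃) = 2g − 1`,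
`deg π*L = 2 deg L` and `h⁰(π*L) = h⁰(L) + h⁰(L ⊗ η)`, the `ι`-invariant bundles
being exactly the pullbacks `π*L`).  Then the `ι`-invariant Clifford index of `C̃`
equals `2 · min (Cliff_η(C)) (gon(C) − 1)`. -/
theorem invariant_clifford_index (X : Curve) (η : X.Pic)
    (hg : 2 ≤ X.g) (hη : η ≠ 0) (hη2 : η + η = 0)
    (Xt : Curve) (pull : X.Pic →+ Xt.Pic)
    (hgt : (Xt.g : ℤ) = 2 * (X.g : ℤ) - 1)
    (hdeg : ∀ L : X.Pic, Xt.deg (pull L) = 2 * X.deg L)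
    (hh0 : ∀ L : X.Pic, Xt.h0 (pull L) = X.h0 L + X.h0 (L + η))
    (c d : ℤ) (hc : X.PrymCliffIs η c) (hd : X.GonalityIs d) :
    IsLeast {m : ℤ | ∃ L : X.Pic,
        Xt.deg (pull L) ≤ (Xt.g : ℤ) - 1 ∧ 2 ≤ Xt.h0 (pull L) ∧
        Xt.cliff (pull L) = m}
      (2 * min c (d - 1)) := by
  -- basic facts
  have hdegeta : X.deg η = 0 := by
    have h := X.deg_add η η
    rw [hη2, X.deg_zero] at h
    omega
  -- c ≤ g - 2 from the witness of hc
  obtain ⟨Lc, ⟨hLcdeg, hLc1, hLc2⟩, hLcval⟩ := hc.1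
  have hcle : c ≤ (X.g : ℤ) - 2 := by
    rw [← hLcval]
    unfold Curve.cliffEta
    omega
  constructor
  · -- membership
    rcases le_or_gt c (d - 1) with hcd | hcd
    · rw [min_eq_left hcd]
      refine ⟨Lc, ?_, ?_, ?_⟩
      · rw [hdeg, hgt]; omega
      · rw [hh0]; omega
      · rw [← hLcval]
        unfold Curve.cliff Curve.cliffEta
        rw [hdeg, hh0]
        push_cast
        ring
    · rw [min_eq_right (by omega : d - 1 ≤ c)]
      obtain ⟨L0, hL02, hL0deg⟩ := hd.1
      -- h0 L0 = 2
      have h0eq : X.h0 L0 = 2 := by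
        by_contra hne
        have h3 : 3 ≤ X.h0 L0 := by omega
        obtain ⟨p⟩ := X.point_nonempty
        have hsub := X.h0_sub_point L0 p
        have h2' : 2 ≤ X.h0 (L0 - X.pt p) := by rcases hsub with h | h <;> omega
        have hmem : X.deg (L0 - X.pt p) ∈
            {m : ℤ | ∃ L : X.Pic, 2 ≤ X.h0 L ∧ X.deg L = m} := ⟨_, h2', rfl⟩
        have := hd.2 hmem
        rw [X.deg_sub, X.deg_pt, hL0deg] at this
        omega
      -- h0 (L0 + η) = 0
      have hetazero : X.h0 (L0 + η) = 0 := by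
        by_contra hne
        have h1 : 1 ≤ X.h0 (L0 + η) := by omega
        have hcon : X.Contributes η L0 := ⟨by omega, by omega, h1⟩
        have hmem : X.cliffEta η L0 ∈
            {m : ℤ | ∃ L : X.Pic, X.Contributes η L ∧ X.cliffEta η L = m} :=
          ⟨L0, hcon, rfl⟩
        have := hc.2 hmem
        unfold Curve.cliffEta at this
        omega
      refine ⟨L0, ?_, ?_, ?_⟩
      · rw [hdeg, hgt]; omega
      · rw [hh0]; omega
      · unfold Curve.cliff
        rw [hdeg, hh0, h0eq, hetazero, hL0deg]
        push_cast
        ring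
  · -- lower bound
    rintro m ⟨L, hLdeg, hL2, hLval⟩
    rw [hdeg, hgt] at hLdeg
    rw [hh0] at hL2
    have hLval' : m = 2 * X.deg L - 2 * ((X.h0 L : ℤ) + (X.h0 (L + η) : ℤ)) + 2 := by
      rw [← hLval]
      unfold Curve.cliff
      rw [hdeg, hh0]
      push_cast
      ring
    by_cases ha : 1 ≤ X.h0 L
    · by_cases hb : 1 ≤ X.h0 (L + η)
      · -- contributes to Prym index
        have hmem : X.cliffEta η L ∈
            {m : ℤ | ∃ M : X.Pic, X.Contributes η M ∧ X.cliffEta η M = m} :=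
          ⟨L, ⟨by omega, ha, hb⟩, rfl⟩
        have := hc.2 hmem
        unfold Curve.cliffEta at this
        have : 2 * min c (d - 1) ≤ 2 * c := by omega
        have hcc := hc.2 hmem
        unfold Curve.cliffEta at hcc
        omega
      · -- h0 (L + η) = 0, so h0 L ≥ 2
        have hb0 : X.h0 (L + η) = 0 := by omega
        have ha2 : 2 ≤ X.h0 L := by omega
        have := X.gon_le d hd L ha2
        have hmin : min c (d - 1) ≤ d - 1 := min_le_right _ _
        omega
    · -- h0 L = 0, so h0 (L + η) ≥ 2
      have ha0 : X.h0 L = 0 := by omega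
      have hb2 : 2 ≤ X.h0 (L + η) := by omega
      have := X.gon_le d hd (L + η) hb2
      rw [X.deg_add, hdegeta] at this
      have hmin : min c (d - 1) ≤ d - 1 := min_le_right _ _
      omega
end
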